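/- arXiv:2406.08992 — 2 statements merged into one kernel-verified Lean document; each statement's English description precedes it below -/
import Mathlib

section
/- Let n1, n2 be positive integers, let γ > 0, let J : ℝ^{n1×n2} × ℝ^{n1} → ℝ be lower semicontinuous and bounded on bounded sets, let μ2^d ∈ ℝ^{n2} with μ2^d ≥ 0 componentwise, and let c_d ∈ ℝ^{n1×n2}. Then the regularized bilevel Hitchcock problem has at least one optimal solution: there exists (π*, μ1*, c*) in the regularized bilevel feasible set F_γ(μ2^d) such that J(π*, μ1*) + (1/(2γ))‖c* − c_d‖_F² ≤ J(π, μ1) + (1/(2γ))‖c − c_d‖_F² for all (π, μ1, c) ∈ F_γ(μ2^d). -/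
noncomputable section

/-- The transport polytope Π(μ1, μ2). -/
def transportPolytope {n1 n2 : ℕ} (μ1 : Fin n1 → ℝ) (μ2 : Fin n2 → ℝ) :
    Set (Fin n1 → Fin n2 → ℝ) :=
  {π | (∀ i j, 0 ≤ π i j) ∧ (∀ i, (∑ j, π i j) = μ1 i) ∧ (∀ j, (∑ i, π i j) = μ2 j)}

/-- The Frobenius inner product ⟨c, π⟩_F.  Note that `frob π π = ‖π‖_F²`. -/
def frob {n1 n2 : ℕ} (c π : Fin n1 → Fin n2 → ℝ) : ℝ := ∑ i, ∑ j, c i j * π i j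

/-- π solves the regularized Hitchcock problem (H_γ) w.r.t. μ1, μ2, c. -/
def SolvesHreg {n1 n2 : ℕ} (γ : ℝ) (μ1 : Fin n1 → ℝ) (μ2 : Fin n2 → ℝ)
    (c π : Fin n1 → Fin n2 → ℝ) : Prop :=
  π ∈ transportPolytope μ1 μ2 ∧
    ∀ θ ∈ transportPolytope μ1 μ2,
      frob c π + γ / 2 * frob π π ≤ frob c θ + γ / 2 * frob θ θ

/-- The regularized bilevel feasible set F_γ(μ2^d). -/
def regBilevelFeas {n1 n2 : ℕ} (γ : ℝ) (μ2d : Fin n2 → ℝ) :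
    Set ((Fin n1 → Fin n2 → ℝ) × (Fin n1 → ℝ) × (Fin n1 → Fin n2 → ℝ)) :=
  {p | (∀ i, 0 ≤ p.2.1 i) ∧ ((∑ i, p.2.1 i) = ∑ j, μ2d j) ∧
    SolvesHreg γ p.2.1 μ2d p.2.2 p.1}

/-- J is bounded on bounded sets. -/
def BddOnBddSets {n1 n2 : ℕ} (J : (Fin n1 → Fin n2 → ℝ) × (Fin n1 → ℝ) → ℝ) : Prop :=
  ∀ M : ℝ, 0 < M → ∃ B : ℝ, ∀ p : (Fin n1 → Fin n2 → ℝ) × (Fin n1 → ℝ), ‖p‖ ≤ M → J p ≤ B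

/-!
Every feasible `(π, μ1)` is a transport plan together with its row marginal, so it lies in the
box `[0, ∑ μ2d]`; there the lower semicontinuous `J` is bounded below, and the Tikhonov term
makes the objective coercive in `c`. Hence, once `F_γ(μ2d)` is known to be closed, the sublevel
sets of the objective on it are compact and a minimizer exists. Closedness is the delicate point,
because the competitor set `Π(μ1, μ2d)` of `(H_γ)` moves with `μ1`. A plan `θ ∈ Π(μ1, μ2d)` can
be adapted continuously to any other admissible marginal `μ1'` (shrink `θ` until it fits under
`μ1'`, then fill the row deficit with a product plan), so `F_γ(μ2d)` is cut out by the inequalities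
"cost of `π` ≤ cost of the adapted `θ`", one closed condition for each fixed `(θ, μ1)`.
Nonemptiness is cheap: every plan `π` solves `(H_γ)` for the cost `c = -γ π`.
-/

open Set

variable {n1 n2 : ℕ}

section Frobenius

lemma mul_self_le_frob_self (x : Fin n1 → Fin n2 → ℝ) (i : Fin n1) (j : Fin n2) :
    x i j * x i j ≤ frob x x :=
  calc x i j * x i j ≤ ∑ j', x i j' * x i j' :=
        Finset.single_le_sum (fun _ _ => mul_self_nonneg _) (Finset.mem_univ j)
    _ ≤ frob x x :=
        Finset.single_le_sum (f := fun i' => ∑ j', x i' j' * x i' j')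
          (fun _ _ => Finset.sum_nonneg fun _ _ => mul_self_nonneg _) (Finset.mem_univ i)

lemma frob_self_nonneg (x : Fin n1 → Fin n2 → ℝ) : 0 ≤ frob x x :=
  Finset.sum_nonneg fun _ _ => Finset.sum_nonneg fun _ _ => mul_self_nonneg _

lemma norm_le_sqrt_frob_self (x : Fin n1 → Fin n2 → ℝ) : ‖x‖ ≤ √(frob x x) := by
  refine (pi_norm_le_iff_of_nonneg (Real.sqrt_nonneg _)).2 fun i =>
    (pi_norm_le_iff_of_nonneg (Real.sqrt_nonneg _)).2 fun j => ?_
  rw [Real.norm_eq_abs, ← Real.sqrt_mul_self_eq_abs]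
  exact Real.sqrt_le_sqrt (mul_self_le_frob_self x i j)

lemma mem_closedBall_of_frob_sub_le {c c₀ : Fin n1 → Fin n2 → ℝ} {R : ℝ}
    (h : frob (c - c₀) (c - c₀) ≤ R) : c ∈ Metric.closedBall c₀ √R :=
  mem_closedBall_iff_norm.2 ((norm_le_sqrt_frob_self _).trans (Real.sqrt_le_sqrt h))

@[fun_prop]
lemma Continuous.frob {X : Type*} [TopologicalSpace X] {f g : X → Fin n1 → Fin n2 → ℝ}
    (hf : Continuous f) (hg : Continuous g) : Continuous fun x => frob (f x) (g x) := by
  unfold _root_.frob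
  fun_prop

end Frobenius

namespace transportPolytope

variable {μ1 : Fin n1 → ℝ} {μ2 : Fin n2 → ℝ} {π : Fin n1 → Fin n2 → ℝ}

lemma nonneg_left (h : π ∈ transportPolytope μ1 μ2) (i : Fin n1) : 0 ≤ μ1 i :=
  h.2.1 i ▸ Finset.sum_nonneg fun j _ => h.1 i j

lemma nonneg_right (h : π ∈ transportPolytope μ1 μ2) (j : Fin n2) : 0 ≤ μ2 j :=
  h.2.2 j ▸ Finset.sum_nonneg fun i _ => h.1 i j

lemma sum_left_eq_sum_right (h : π ∈ transportPolytope μ1 μ2) : ∑ i, μ1 i = ∑ j, μ2 j := by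
  simp only [← h.2.1, ← h.2.2]
  exact Finset.sum_comm

lemma le_sum_right (h : π ∈ transportPolytope μ1 μ2) (j : Fin n2) : μ2 j ≤ ∑ j', μ2 j' :=
  Finset.single_le_sum (fun j' _ => nonneg_right h j') (Finset.mem_univ j)

lemma mem_Icc (h : π ∈ transportPolytope μ1 μ2) : π ∈ Icc 0 fun _ _ => ∑ j, μ2 j := by
  refine ⟨h.1, fun i j => ?_⟩
  calc π i j ≤ ∑ i', π i' j := Finset.single_le_sum (fun i' _ => h.1 i' j) (Finset.mem_univ i)
    _ = μ2 j := h.2.2 j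
    _ ≤ ∑ j', μ2 j' := le_sum_right h j

lemma left_mem_Icc (h : π ∈ transportPolytope μ1 μ2) : μ1 ∈ Icc 0 fun _ => ∑ j, μ2 j := by
  refine ⟨nonneg_left h, fun i => ?_⟩
  rw [← sum_left_eq_sum_right h]
  exact Finset.single_le_sum (fun i' _ => nonneg_left h i') (Finset.mem_univ i)

lemma isClosed_setOf_mem {X : Type*} [TopologicalSpace X] {f : X → Fin n1 → Fin n2 → ℝ}
    {g : X → Fin n1 → ℝ} (hf : Continuous f) (hg : Continuous g) (μ2 : Fin n2 → ℝ) :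
    IsClosed {x | f x ∈ transportPolytope (g x) μ2} := by
  have h : {x | f x ∈ transportPolytope (g x) μ2} =
      (⋂ i, ⋂ j, {x | 0 ≤ f x i j}) ∩ ((⋂ i, {x | ∑ j, f x i j = g x i}) ∩
        ⋂ j, {x | ∑ i, f x i j = μ2 j}) := by
    ext x; simp [transportPolytope]
  rw [h]
  refine .inter (isClosed_iInter fun i => isClosed_iInter fun j => isClosed_le ?_ ?_)
    (.inter (isClosed_iInter fun i => isClosed_eq ?_ ?_)
      (isClosed_iInter fun j => isClosed_eq ?_ ?_)) <;> fun_prop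

lemma const_div_mem (hn1 : 0 < n1) (hμ2 : ∀ j, 0 ≤ μ2 j) :
    (fun _ j => μ2 j / n1) ∈ transportPolytope (fun _ : Fin n1 => (∑ j, μ2 j) / n1) μ2 := by
  refine ⟨fun i j => div_nonneg (hμ2 j) n1.cast_nonneg, fun i => (Finset.sum_div ..).symm,
    fun j => ?_⟩
  simp only [Finset.sum_const, Finset.card_univ, Fintype.card_fin, nsmul_eq_mul]
  field_simp

end transportPolytope

def hitchcockCost (γ : ℝ) (c π : Fin n1 → Fin n2 → ℝ) : ℝ := frob c π + γ / 2 * frob π π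

lemma solvesHreg_iff {γ : ℝ} {μ1 : Fin n1 → ℝ} {μ2 : Fin n2 → ℝ} {c π : Fin n1 → Fin n2 → ℝ} :
    SolvesHreg γ μ1 μ2 c π ↔ π ∈ transportPolytope μ1 μ2 ∧
      ∀ θ ∈ transportPolytope μ1 μ2, hitchcockCost γ c π ≤ hitchcockCost γ c θ :=
  Iff.rfl

lemma hitchcockCost_neg_smul_sub (γ : ℝ) (π θ : Fin n1 → Fin n2 → ℝ) :
    hitchcockCost γ (-γ • π) θ - hitchcockCost γ (-γ • π) π = γ / 2 * frob (θ - π) (θ - π) := by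
  simp only [hitchcockCost, frob, Pi.sub_apply, Pi.smul_apply, smul_eq_mul, Finset.mul_sum,
    ← Finset.sum_add_distrib, ← Finset.sum_sub_distrib]
  exact Finset.sum_congr rfl fun i _ => Finset.sum_congr rfl fun j _ => by ring

lemma solvesHreg_neg_smul {γ : ℝ} (hγ : 0 ≤ γ) {μ1 : Fin n1 → ℝ} {μ2 : Fin n2 → ℝ}
    {π : Fin n1 → Fin n2 → ℝ} (hπ : π ∈ transportPolytope μ1 μ2) :
    SolvesHreg γ μ1 μ2 (-γ • π) π := by
  refine solvesHreg_iff.2 ⟨hπ, fun θ _ => sub_nonneg.1 ?_⟩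
  rw [hitchcockCost_neg_smul_sub]
  exact mul_nonneg (by positivity) (frob_self_nonneg _)

section AdaptPlan

variable {μ1 μ1' : Fin n1 → ℝ} {μ2 : Fin n2 → ℝ}

-- Rows with `μ1 i = 0` contribute the junk quotient `x / 0 = 0`; they impose no constraint.
def shrinkFactor (μ1 μ1' : Fin n1 → ℝ) : ℝ := min 1 (∑ i, max 0 ((μ1 i - μ1' i) / μ1 i))

lemma shrinkFactor_self (μ1 : Fin n1 → ℝ) : shrinkFactor μ1 μ1 = 0 := by
  simp [shrinkFactor]

lemma continuous_shrinkFactor (μ1 : Fin n1 → ℝ) : Continuous (shrinkFactor μ1) := by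
  unfold shrinkFactor
  fun_prop

lemma one_sub_shrinkFactor_mul_le (hμ1 : ∀ i, 0 ≤ μ1 i) (hμ1' : ∀ i, 0 ≤ μ1' i) (i : Fin n1) :
    (1 - shrinkFactor μ1 μ1') * μ1 i ≤ μ1' i := by
  rcases (hμ1 i).eq_or_lt with h0 | hpos
  · simpa [← h0] using hμ1' i
  have hquot : (μ1 i - μ1' i) / μ1 i ≤ shrinkFactor μ1 μ1' := by
    refine le_min ?_ ?_
    · rw [div_le_one hpos]; linarith [hμ1' i]
    · exact (le_max_right _ _).trans
        (Finset.single_le_sum (f := fun k => max 0 ((μ1 k - μ1' k) / μ1 k))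
          (fun _ _ => le_max_left _ _) (Finset.mem_univ i))
  rw [div_le_iff₀ hpos] at hquot
  linarith

def adaptPlan (μ2 : Fin n2 → ℝ) (μ1 : Fin n1 → ℝ) (θ : Fin n1 → Fin n2 → ℝ)
    (μ1' : Fin n1 → ℝ) : Fin n1 → Fin n2 → ℝ :=
  fun i j => (1 - shrinkFactor μ1 μ1') * θ i j +
    (μ1' i - (1 - shrinkFactor μ1 μ1') * μ1 i) * μ2 j / ∑ k, μ2 k

lemma adaptPlan_self (μ2 : Fin n2 → ℝ) (μ1 : Fin n1 → ℝ) (θ : Fin n1 → Fin n2 → ℝ) :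
    adaptPlan μ2 μ1 θ μ1 = θ := by
  ext i j
  simp [adaptPlan, shrinkFactor_self]

lemma continuous_adaptPlan (μ2 : Fin n2 → ℝ) (μ1 : Fin n1 → ℝ) (θ : Fin n1 → Fin n2 → ℝ) :
    Continuous (adaptPlan μ2 μ1 θ) := by
  have := continuous_shrinkFactor μ1
  unfold adaptPlan
  fun_prop

lemma adaptPlan_mem {θ π : Fin n1 → Fin n2 → ℝ} (hθ : θ ∈ transportPolytope μ1 μ2)
    (hπ : π ∈ transportPolytope μ1' μ2) :
    adaptPlan μ2 μ1 θ μ1' ∈ transportPolytope μ1' μ2 := by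
  set t := 1 - shrinkFactor μ1 μ1'
  set S := ∑ k, μ2 k
  have hμ2 := transportPolytope.nonneg_right hθ
  have hdef i : 0 ≤ μ1' i - t * μ1 i := sub_nonneg.2 <| one_sub_shrinkFactor_mul_le
    (transportPolytope.nonneg_left hθ) (transportPolytope.nonneg_left hπ) i
  refine ⟨fun i j => ?_, fun i => ?_, fun j => ?_⟩
  · have : 0 ≤ t := sub_nonneg.2 (min_le_left _ _)
    exact add_nonneg (mul_nonneg this (hθ.1 i j))
      (div_nonneg (mul_nonneg (hdef i) (hμ2 j)) (Finset.sum_nonneg fun k _ => hμ2 k))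
  · have hcancel : (μ1' i - t * μ1 i) * S / S = μ1' i - t * μ1 i :=
      mul_div_cancel_of_imp fun hS => by
        have h0 : μ1 i ≤ 0 := hS ▸ (transportPolytope.left_mem_Icc hθ).2 i
        have h0' : μ1' i ≤ 0 := hS ▸ (transportPolytope.left_mem_Icc hπ).2 i
        simp [le_antisymm h0 (transportPolytope.nonneg_left hθ i),
          le_antisymm h0' (transportPolytope.nonneg_left hπ i)]
    calc ∑ j, (t * θ i j + (μ1' i - t * μ1 i) * μ2 j / S)
        = t * ∑ j, θ i j + (μ1' i - t * μ1 i) * S / S := by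
          rw [Finset.sum_add_distrib, ← Finset.mul_sum, ← Finset.sum_div, ← Finset.mul_sum]
      _ = μ1' i := by rw [hθ.2.1 i, hcancel]; ring
  · have hdef_sum : ∑ i, (μ1' i - t * μ1 i) = (1 - t) * S := by
      rw [Finset.sum_sub_distrib, ← Finset.mul_sum, transportPolytope.sum_left_eq_sum_right hθ,
        transportPolytope.sum_left_eq_sum_right hπ]
      ring
    have hcancel : S * μ2 j / S = μ2 j := mul_div_cancel_left_of_imp fun hS =>
      le_antisymm (hS ▸ transportPolytope.le_sum_right hθ j) (hμ2 j)
    calc ∑ i, (t * θ i j + (μ1' i - t * μ1 i) * μ2 j / S)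
        = t * ∑ i, θ i j + (1 - t) * (S * μ2 j / S) := by
          rw [Finset.sum_add_distrib, ← Finset.mul_sum, ← Finset.sum_div, ← Finset.sum_mul,
            hdef_sum, mul_assoc, mul_div_assoc, mul_div_assoc]
      _ = μ2 j := by rw [hθ.2.2 j, hcancel]; ring

end AdaptPlan

section Feasible

variable {γ : ℝ} {μ2 : Fin n2 → ℝ}

lemma mem_regBilevelFeas_iff {p : (Fin n1 → Fin n2 → ℝ) × (Fin n1 → ℝ) × (Fin n1 → Fin n2 → ℝ)} :
    p ∈ regBilevelFeas γ μ2 ↔ SolvesHreg γ p.2.1 μ2 p.2.2 p.1 :=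
  ⟨fun h => h.2.2, fun h => ⟨transportPolytope.nonneg_left h.1,
    transportPolytope.sum_left_eq_sum_right h.1, h⟩⟩

lemma regBilevelFeas_eq (γ : ℝ) (μ2 : Fin n2 → ℝ) :
    regBilevelFeas (n1 := n1) γ μ2 = {p | p.1 ∈ transportPolytope p.2.1 μ2} ∩
      ⋂ q ∈ {q : (Fin n1 → Fin n2 → ℝ) × (Fin n1 → ℝ) | q.1 ∈ transportPolytope q.2 μ2},
        {p | hitchcockCost γ p.2.2 p.1 ≤ hitchcockCost γ p.2.2 (adaptPlan μ2 q.2 q.1 p.2.1)} := by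
  ext p
  simp only [mem_regBilevelFeas_iff, solvesHreg_iff, mem_inter_iff, mem_iInter, mem_ofPred_eq]
  refine ⟨fun h => ⟨h.1, fun q hq => h.2 _ (adaptPlan_mem hq h.1)⟩, fun h => ⟨h.1, fun θ hθ => ?_⟩⟩
  simpa only [adaptPlan_self] using h.2 (θ, p.2.1) hθ

lemma isClosed_regBilevelFeas (γ : ℝ) (μ2 : Fin n2 → ℝ) :
    IsClosed (regBilevelFeas (n1 := n1) γ μ2) := by
  rw [regBilevelFeas_eq]
  refine (transportPolytope.isClosed_setOf_mem (by fun_prop) (by fun_prop) μ2).inter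
    (isClosed_biInter fun q _ => isClosed_le ?_ ?_)
  · unfold hitchcockCost; fun_prop
  · have := continuous_adaptPlan μ2 q.2 q.1
    unfold hitchcockCost; fun_prop

lemma regBilevelFeas_nonempty (hn1 : 0 < n1) (hγ : 0 ≤ γ) (hμ2 : ∀ j, 0 ≤ μ2 j) :
    (regBilevelFeas (n1 := n1) γ μ2).Nonempty :=
  ⟨(_, _, _), mem_regBilevelFeas_iff.2
    (solvesHreg_neg_smul hγ (transportPolytope.const_div_mem hn1 hμ2))⟩

end Feasible

lemma LowerSemicontinuous.exists_isMinOn_of_sublevel_subset {X β : Type*} [TopologicalSpace X]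
    [LinearOrder β] [TopologicalSpace β] [OrderTopology β] {f : X → β} (hf : LowerSemicontinuous f)
    {s K : Set X} (hs : IsClosed s) (hK : IsCompact K) {x₀ : X} (hx₀ : x₀ ∈ s)
    (hsub : s ∩ f ⁻¹' Iic (f x₀) ⊆ K) : ∃ x ∈ s, IsMinOn f s x := by
  have hT : IsCompact (s ∩ f ⁻¹' Iic (f x₀)) :=
    hK.of_isClosed_subset (hs.inter (hf.isClosed_preimage _)) hsub
  obtain ⟨x, ⟨hxs, hx⟩, hmin⟩ :=
    (hf.lowerSemicontinuousOn _).exists_isMinOn (s := s ∩ f ⁻¹' Iic (f x₀)) ⟨x₀, hx₀, le_rfl⟩ hT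
  refine ⟨x, hxs, fun y hy => ?_⟩
  rcases le_total (f y) (f x₀) with hy₀ | hy₀
  · exact hmin ⟨hy, hy₀⟩
  · exact le_trans hx hy₀

theorem regularized_bilevel_hitchcock_has_solution_general (n1 n2 : ℕ) (hn1 : 0 < n1)
    (γ : ℝ) (hγ : 0 < γ)
    (J : (Fin n1 → Fin n2 → ℝ) × (Fin n1 → ℝ) → ℝ)
    (hJ : LowerSemicontinuous J)
    (μ2d : Fin n2 → ℝ) (hμ2d : ∀ j, 0 ≤ μ2d j) (cd : Fin n1 → Fin n2 → ℝ) :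
    ∃ p ∈ regBilevelFeas (n1 := n1) γ μ2d,
      ∀ q ∈ regBilevelFeas (n1 := n1) γ μ2d,
        J (p.1, p.2.1) + 1 / (2 * γ) * frob (p.2.2 - cd) (p.2.2 - cd) ≤
          J (q.1, q.2.1) + 1 / (2 * γ) * frob (q.2.2 - cd) (q.2.2 - cd) := by
  set Φ : (Fin n1 → Fin n2 → ℝ) × (Fin n1 → ℝ) × (Fin n1 → Fin n2 → ℝ) → ℝ :=
    fun p => J (p.1, p.2.1) + 1 / (2 * γ) * frob (p.2.2 - cd) (p.2.2 - cd)
  have hΦ : LowerSemicontinuous Φ :=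
    (hJ.comp (by fun_prop)).add (Continuous.lowerSemicontinuous (by fun_prop))
  set S := ∑ j, μ2d j
  have hbox : IsCompact (Icc (0 : Fin n1 → Fin n2 → ℝ) (fun _ _ => S) ×ˢ
      Icc (0 : Fin n1 → ℝ) (fun _ => S)) :=
    isCompact_Icc.prod isCompact_Icc
  obtain ⟨m, hm⟩ := (hJ.lowerSemicontinuousOn _).bddBelow_of_isCompact hbox
  obtain ⟨p₀, hp₀⟩ := regBilevelFeas_nonempty hn1 hγ.le hμ2d
  set r := √(2 * γ * (Φ p₀ - m))
  have hsub : regBilevelFeas γ μ2d ∩ Φ ⁻¹' Iic (Φ p₀) ⊆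
      Icc 0 (fun _ _ => S) ×ˢ (Icc 0 (fun _ => S) ×ˢ Metric.closedBall cd r) := by
    rintro q ⟨hq, hΦq : Φ q ≤ Φ p₀⟩
    have hπ := transportPolytope.mem_Icc hq.2.2.1
    have hμ1 := transportPolytope.left_mem_Icc hq.2.2.1
    have hJq : m ≤ J (q.1, q.2.1) := hm (mem_image_of_mem J ⟨hπ, hμ1⟩)
    have hc : frob (q.2.2 - cd) (q.2.2 - cd) ≤ 2 * γ * (Φ p₀ - m) := by
      rw [← div_le_iff₀' (by positivity), ← one_div_mul_eq_div]
      linarith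
    exact ⟨hπ, hμ1, mem_closedBall_of_frob_sub_le hc⟩
  obtain ⟨p, hp, hmin⟩ := hΦ.exists_isMinOn_of_sublevel_subset (isClosed_regBilevelFeas γ μ2d)
    (isCompact_Icc.prod (isCompact_Icc.prod (isCompact_closedBall cd r))) hp₀ hsub
  exact ⟨p, hp, isMinOn_iff.1 hmin⟩

/-- The regularized bilevel Hitchcock problem has at least one optimal solution. -/
theorem regularized_bilevel_hitchcock_has_solution (n1 n2 : ℕ) (hn1 : 0 < n1) (hn2 : 0 < n2)
    (γ : ℝ) (hγ : 0 < γ)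
    (J : (Fin n1 → Fin n2 → ℝ) × (Fin n1 → ℝ) → ℝ)
    (hJ : LowerSemicontinuous J) (hJbdd : BddOnBddSets J)
    (μ2d : Fin n2 → ℝ) (hμ2d : ∀ j, 0 ≤ μ2d j) (cd : Fin n1 → Fin n2 → ℝ) :
    ∃ p ∈ regBilevelFeas (n1 := n1) γ μ2d,
      ∀ q ∈ regBilevelFeas (n1 := n1) γ μ2d,
        J (p.1, p.2.1) + 1 / (2 * γ) * frob (p.2.2 - cd) (p.2.2 - cd) ≤
          J (q.1, q.2.1) + 1 / (2 * γ) * frob (q.2.2 - cd) (q.2.2 - cd) :=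
  regularized_bilevel_hitchcock_has_solution_general n1 n2 hn1 γ hγ J hJ μ2d hμ2d cd
end
end

section
/- Let n1, n2 be positive integers, let γ > 0 and ε > 0, and let c ∈ ℝ^{n1×n2}. Then the solution operator F_{γ,ε} is directionally differentiable: for every μ = (μ1, μ2) ∈ ℝ^{n1} × ℝ^{n2} and every direction h = (h1, h2) ∈ ℝ^{n1} × ℝ^{n2}, the limit of (F_{γ,ε}(μ + t h) − F_{γ,ε}(μ))/t as t → 0⁺ exists and equals the unique pair (η1, η2) ∈ ℝ^{n1} × ℝ^{n2} satisfying Σ_j max'((α1)_i + (α2)_j − c_{ij}; (η1)_i + (η2)_j) + γ ε (η1)_i = γ (h1)_i for all i and Σ_i max'((α1)_i + (α2)_j − c_{ij}; (η1)_i + (η2)_j) + γ ε (η2)_j = γ (h2)_j for all j, where (α1, α2) = F_{γ,ε}(μ). -/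
open Filter Topology

noncomputable section

/-- The regularized dual system (for parameters γ, ε and cost c) associated with data
(μ1, μ2), in the unknowns (α1, α2). -/
def DualSys {n1 n2 : ℕ} (γ ε : ℝ) (c : Fin n1 → Fin n2 → ℝ)
    (μ1 : Fin n1 → ℝ) (μ2 : Fin n2 → ℝ) (α1 : Fin n1 → ℝ) (α2 : Fin n2 → ℝ) : Prop :=
  (∀ i, (∑ j, max (α1 i + α2 j - c i j) 0) + γ * ε * α1 i = γ * μ1 i) ∧
  (∀ j, (∑ i, max (α1 i + α2 j - c i j) 0) + γ * ε * α2 j = γ * μ2 j)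

/-- max'(a; b), the directional derivative of x ↦ max(0, x) at a in direction b. -/
def maxd (a b : ℝ) : ℝ := if 0 < a then b else if a = 0 then max 0 b else 0

/-- The linearized dual system in the unknowns (η1, η2) with data matrix d and
right-hand side (h1, h2). -/
def LinSys {n1 n2 : ℕ} (γ ε : ℝ) (d : Fin n1 → Fin n2 → ℝ)
    (h1 : Fin n1 → ℝ) (h2 : Fin n2 → ℝ) (η1 : Fin n1 → ℝ) (η2 : Fin n2 → ℝ) : Prop :=
  (∀ i, (∑ j, maxd (d i j) (η1 i + η2 j)) + γ * ε * η1 i = γ * h1 i) ∧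
  (∀ j, (∑ i, maxd (d i j) (η1 i + η2 j)) + γ * ε * η2 j = γ * h2 j)


/-!
Both the dual system and the linearized system have the shape
`∑ⱼ φᵢⱼ(η₁ᵢ + η₂ⱼ) + k η₁ᵢ = r₁ᵢ`, `∑ᵢ φᵢⱼ(η₁ᵢ + η₂ⱼ) + k η₂ⱼ = r₂ⱼ` with every `φᵢⱼ` monotone.
A maximum principle for such systems gives `k ‖η - ζ‖ ≤ ‖r - s‖` in the sup norm, so `F` is
`1/ε`-Lipschitz and the linearized system has at most one solution.

The difference quotient `q t = (F (μ + t h) - F μ) / t` solves the system with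
`φᵢⱼ(x) = (max (dᵢⱼ + t x) 0 - max dᵢⱼ 0) / t`, where `α = F μ` and `dᵢⱼ = α₁ᵢ + α₂ⱼ - cᵢⱼ`;
this `φᵢⱼ(x)` equals `max'(dᵢⱼ; x)` as soon as `dᵢⱼ = 0` or `t |x| < |dᵢⱼ|`. By the Lipschitz
bound `q t` stays bounded, so for all small `t > 0` it solves the linearized system, and by
uniqueness it is then constant.
-/

theorem exists_norm_apply_eq_norm {m E : Type*} [Fintype m] [Nonempty m]
    [SeminormedAddCommGroup E] (v : m → E) : ∃ i, ‖v i‖ = ‖v‖ := by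
  obtain ⟨i, -, hi⟩ := Finset.univ.exists_max_image (fun i => ‖v i‖) Finset.univ_nonempty
  refine ⟨i, le_antisymm (norm_le_pi_norm v i) ?_⟩
  exact (pi_norm_le_iff_of_nonneg (norm_nonneg _)).2 fun j => hi j (Finset.mem_univ j)

section CoupledSys

variable {m n : Type*} [Fintype m] [Fintype n]

def CoupledSys (φ : m → n → ℝ → ℝ) (k : ℝ) (r η : (m → ℝ) × (n → ℝ)) : Prop :=
  (∀ i, (∑ j, φ i j (η.1 i + η.2 j)) + k * η.1 i = r.1 i) ∧
  (∀ j, (∑ i, φ i j (η.1 i + η.2 j)) + k * η.2 j = r.2 j)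

variable {φ : m → n → ℝ → ℝ} {k : ℝ} {r s η ζ : (m → ℝ) × (n → ℝ)}

theorem CoupledSys.swap (hη : CoupledSys φ k r η) :
    CoupledSys (fun j i => φ i j) k r.swap η.swap := by
  constructor
  · intro j
    simpa only [Prod.fst_swap, Prod.snd_swap, add_comm (η.2 j)] using hη.2 j
  · intro i
    simpa only [Prod.fst_swap, Prod.snd_swap, add_comm (η.2 _)] using hη.1 i

theorem CoupledSys.congr (hη : CoupledSys φ k r η) {ψ : m → n → ℝ → ℝ}
    (hψ : ∀ i j, φ i j (η.1 i + η.2 j) = ψ i j (η.1 i + η.2 j)) : CoupledSys ψ k r η := by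
  simp only [CoupledSys, ← hψ]
  exact hη

theorem CoupledSys.sub (hη : CoupledSys φ k r η) (hζ : CoupledSys φ k s ζ) :
    CoupledSys (fun i j x => φ i j (x + (ζ.1 i + ζ.2 j)) - φ i j (ζ.1 i + ζ.2 j))
      k (r - s) (η - ζ) := by
  have hshift : ∀ i j, (η - ζ).1 i + (η - ζ).2 j + (ζ.1 i + ζ.2 j) = η.1 i + η.2 j :=
    fun i j => by simp only [Prod.fst_sub, Prod.snd_sub, Pi.sub_apply]; ring
  constructor
  · intro i
    simp only [hshift, Finset.sum_sub_distrib]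
    simp only [Prod.fst_sub, Pi.sub_apply]
    linear_combination hη.1 i - hζ.1 i
  · intro j
    simp only [hshift, Finset.sum_sub_distrib]
    simp only [Prod.snd_sub, Pi.sub_apply]
    linear_combination hη.2 j - hζ.2 j

theorem CoupledSys.smul (hη : CoupledSys φ k r η) (t : ℝ) :
    CoupledSys (fun i j x => t⁻¹ * φ i j (t * x)) k (t⁻¹ • r) (t⁻¹ • η) := by
  rcases eq_or_ne t 0 with rfl | ht
  · simp [CoupledSys]
  have hscale : ∀ i j, t * ((t⁻¹ • η).1 i + (t⁻¹ • η).2 j) = η.1 i + η.2 j := fun i j => by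
    simp only [Prod.smul_fst, Prod.smul_snd, Pi.smul_apply, smul_eq_mul]
    field_simp
  constructor
  · intro i
    simp only [hscale, ← Finset.mul_sum]
    simp only [Prod.smul_fst, Pi.smul_apply, smul_eq_mul]
    linear_combination t⁻¹ * hη.1 i
  · intro j
    simp only [hscale, ← Finset.mul_sum]
    simp only [Prod.smul_snd, Pi.smul_apply, smul_eq_mul]
    linear_combination t⁻¹ * hη.2 j

-- Maximum principle: when `|η.1 i|` dominates every `|η.2 j|`, all the arguments
-- `η.1 i + η.2 j` in row `i` have the sign of `η.1 i`, and so have their images under `φ i j`.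
theorem CoupledSys.mul_abs_fst_le (hη : CoupledSys φ k r η) (hφ : ∀ i j, Monotone (φ i j))
    (hφ0 : ∀ i j, φ i j 0 = 0) {i : m} (hi : ∀ j, |η.2 j| ≤ |η.1 i|) :
    k * |η.1 i| ≤ |r.1 i| := by
  have hrow := hη.1 i
  rcases le_total 0 (η.1 i) with hpos | hneg
  · have hsum : 0 ≤ ∑ j, φ i j (η.1 i + η.2 j) := Finset.sum_nonneg fun j _ =>
      hφ0 i j ▸ hφ i j (by linarith [neg_abs_le (η.2 j), hi j, abs_of_nonneg hpos])
    rw [abs_of_nonneg hpos]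
    linarith [le_abs_self (r.1 i)]
  · have hsum : ∑ j, φ i j (η.1 i + η.2 j) ≤ 0 := Finset.sum_nonpos fun j _ =>
      hφ0 i j ▸ hφ i j (by linarith [le_abs_self (η.2 j), hi j, abs_of_nonpos hneg])
    rw [abs_of_nonpos hneg]
    linarith [neg_abs_le (r.1 i)]

theorem CoupledSys.mul_norm_le_of_norm_snd_le (hη : CoupledSys φ k r η)
    (hφ : ∀ i j, Monotone (φ i j)) (hφ0 : ∀ i j, φ i j 0 = 0) (h : ‖η.2‖ ≤ ‖η.1‖) :
    k * ‖η‖ ≤ ‖r‖ := by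
  rcases isEmpty_or_nonempty m with hm | hm
  · have hη1 : ‖η.1‖ = 0 := by rw [Subsingleton.elim η.1 0, norm_zero]
    have hη0 : ‖η‖ = 0 := by rw [Prod.norm_def, max_eq_left h, hη1]
    simp [hη0]
  obtain ⟨i, hi⟩ := exists_norm_apply_eq_norm η.1
  rw [Real.norm_eq_abs] at hi
  have hdom : ∀ j, |η.2 j| ≤ |η.1 i| := fun j => (norm_le_pi_norm η.2 j).trans (h.trans hi.ge)
  calc k * ‖η‖ = k * |η.1 i| := by rw [Prod.norm_def, max_eq_left h, hi]
    _ ≤ |r.1 i| := hη.mul_abs_fst_le hφ hφ0 hdom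
    _ ≤ ‖r‖ := (norm_le_pi_norm r.1 i).trans (norm_fst_le r)

theorem CoupledSys.mul_norm_le (hη : CoupledSys φ k r η) (hφ : ∀ i j, Monotone (φ i j))
    (hφ0 : ∀ i j, φ i j 0 = 0) : k * ‖η‖ ≤ ‖r‖ := by
  rcases le_total ‖η.2‖ ‖η.1‖ with h | h
  · exact hη.mul_norm_le_of_norm_snd_le hφ hφ0 h
  · simpa only [Prod.norm_def, Prod.fst_swap, Prod.snd_swap, max_comm] using
      hη.swap.mul_norm_le_of_norm_snd_le (fun j i => hφ i j) (fun j i => hφ0 i j) h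

theorem CoupledSys.mul_norm_sub_le (hη : CoupledSys φ k r η) (hζ : CoupledSys φ k s ζ)
    (hφ : ∀ i j, Monotone (φ i j)) : k * ‖η - ζ‖ ≤ ‖r - s‖ :=
  (hη.sub hζ).mul_norm_le (fun i j _ _ hxy => sub_le_sub_right (hφ i j (by linarith)) _)
    (fun i j => by simp)

theorem CoupledSys.eq (hη : CoupledSys φ k r η) (hζ : CoupledSys φ k r ζ)
    (hφ : ∀ i j, Monotone (φ i j)) (hk : 0 < k) : η = ζ := by
  have hdiff := hη.mul_norm_sub_le hζ hφ
  rw [sub_self, norm_zero, ← mul_zero k] at hdiff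
  exact sub_eq_zero.1 (norm_le_zero_iff.1 (le_of_mul_le_mul_left hdiff hk))

end CoupledSys

theorem monotone_maxd (a : ℝ) : Monotone (maxd a) := by
  intro x y hxy
  unfold maxd
  split_ifs
  exacts [hxy, max_le_max le_rfl hxy, le_rfl]

theorem inv_mul_max_add_sub_max {a t x : ℝ} (ht : 0 < t) (hsmall : a ≠ 0 → t * |x| < |a|) :
    t⁻¹ * (max (t * x + a) 0 - max a 0) = maxd a x := by
  rw [inv_mul_eq_iff_eq_mul₀ ht.ne']
  have htx : |t * x| = t * |x| := by rw [abs_mul, abs_of_pos ht]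
  rcases lt_trichotomy a 0 with ha | rfl | ha
  · have hneg : t * x + a ≤ 0 := by
      linarith [le_abs_self (t * x), hsmall ha.ne, abs_of_neg ha]
    rw [maxd, if_neg ha.not_gt, if_neg ha.ne, max_eq_right ha.le, max_eq_right hneg]
    ring
  · simp [maxd, mul_max_of_nonneg _ _ ht.le, max_comm]
  · have hpos : 0 ≤ t * x + a := by
      linarith [neg_abs_le (t * x), hsmall ha.ne', abs_of_pos ha]
    rw [maxd, if_pos ha, max_eq_left ha.le, max_eq_left hpos]
    ring

section DualSys

variable {n1 n2 : ℕ} {γ ε : ℝ} {c : Fin n1 → Fin n2 → ℝ} {μ ν α β : (Fin n1 → ℝ) × (Fin n2 → ℝ)}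

theorem DualSys.coupledSys (hα : DualSys γ ε c μ.1 μ.2 α.1 α.2) :
    CoupledSys (fun i j x => max (x - c i j) 0) (γ * ε) (γ • μ) α :=
  hα

theorem linSys_iff_coupledSys {d : Fin n1 → Fin n2 → ℝ} {h η : (Fin n1 → ℝ) × (Fin n2 → ℝ)} :
    LinSys γ ε d h.1 h.2 η.1 η.2 ↔ CoupledSys (fun i j => maxd (d i j)) (γ * ε) (γ • h) η :=
  Iff.rfl

theorem DualSys.mul_norm_sub_le (hα : DualSys γ ε c μ.1 μ.2 α.1 α.2)
    (hβ : DualSys γ ε c ν.1 ν.2 β.1 β.2) (hγ : 0 < γ) : ε * ‖α - β‖ ≤ ‖μ - ν‖ := by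
  have h := hα.coupledSys.mul_norm_sub_le hβ.coupledSys
    fun i j _ _ hxy => max_le_max (sub_le_sub_right hxy _) le_rfl
  rw [← smul_sub, norm_smul, Real.norm_of_nonneg hγ.le, mul_assoc] at h
  exact le_of_mul_le_mul_left h hγ

theorem DualSys.coupledSys_diffQuot {t : ℝ} {h : (Fin n1 → ℝ) × (Fin n2 → ℝ)}
    (hα : DualSys γ ε c μ.1 μ.2 α.1 α.2)
    (hβ : DualSys γ ε c (μ + t • h).1 (μ + t • h).2 β.1 β.2) (ht : t ≠ 0) :
    CoupledSys (fun i j x => t⁻¹ * (max (t * x + (α.1 i + α.2 j - c i j)) 0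
      - max (α.1 i + α.2 j - c i j) 0)) (γ * ε) (γ • h) (t⁻¹ • (β - α)) := by
  have h := (hβ.coupledSys.sub hα.coupledSys).smul t
  rw [← smul_sub, add_sub_cancel_left, smul_comm, inv_smul_smul₀ ht] at h
  simpa only [add_sub_assoc] using h

end DualSys

theorem eventually_forall_mul_lt_abs {m n : Type*} [Finite m] [Finite n] (d : m → n → ℝ)
    (B : ℝ) : ∀ᶠ t in 𝓝[>] 0, ∀ i j, d i j ≠ 0 → t * B < |d i j| := by
  refine eventually_all.2 fun i => eventually_all.2 fun j => ?_
  by_cases hd : d i j = 0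
  · exact .of_forall fun _ h => absurd hd h
  have hlim : Tendsto (fun t : ℝ => t * B) (𝓝[>] 0) (𝓝 0) := by
    simpa using ((continuous_mul_const B).tendsto 0).mono_left nhdsWithin_le_nhds
  exact (hlim.eventually_lt_const (abs_pos.2 hd)).mono fun _ h _ => h

theorem solution_operator_directionally_differentiable_general
    (n1 n2 : ℕ)
    (γ ε : ℝ) (hγ : 0 < γ) (hε : 0 < ε) (c : Fin n1 → Fin n2 → ℝ)
    (F : (Fin n1 → ℝ) × (Fin n2 → ℝ) → (Fin n1 → ℝ) × (Fin n2 → ℝ))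
    (hF : ∀ μ : (Fin n1 → ℝ) × (Fin n2 → ℝ), DualSys γ ε c μ.1 μ.2 (F μ).1 (F μ).2)
    (μ h : (Fin n1 → ℝ) × (Fin n2 → ℝ)) :
    ∃ η : (Fin n1 → ℝ) × (Fin n2 → ℝ),
      LinSys γ ε (fun i j => (F μ).1 i + (F μ).2 j - c i j) h.1 h.2 η.1 η.2 ∧
      (∀ η' : (Fin n1 → ℝ) × (Fin n2 → ℝ),
        LinSys γ ε (fun i j => (F μ).1 i + (F μ).2 j - c i j) h.1 h.2 η'.1 η'.2 → η' = η) ∧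
      Tendsto (fun t : ℝ => (t⁻¹ : ℝ) • (F (μ + t • h) - F μ)) (𝓝[>] 0) (𝓝 η) := by
  set d := fun i j => (F μ).1 i + (F μ).2 j - c i j
  set q := fun t : ℝ => t⁻¹ • (F (μ + t • h) - F μ)
  have hq_le : ∀ t > 0, ‖q t‖ ≤ ‖h‖ / ε := fun t ht => by
    have hlip := (hF (μ + t • h)).mul_norm_sub_le (hF μ) hγ
    rw [add_sub_cancel_left, norm_smul, Real.norm_of_nonneg ht.le] at hlip
    rw [norm_smul, norm_inv, Real.norm_of_nonneg ht.le, le_div_iff₀ hε]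
    calc t⁻¹ * ‖F (μ + t • h) - F μ‖ * ε = t⁻¹ * (ε * ‖F (μ + t • h) - F μ‖) := by ring
      _ ≤ t⁻¹ * (t * ‖h‖) := by gcongr
      _ = ‖h‖ := inv_mul_cancel_left₀ ht.ne' _
  have hlin : ∀ᶠ t in 𝓝[>] 0, LinSys γ ε d h.1 h.2 (q t).1 (q t).2 := by
    filter_upwards [self_mem_nhdsWithin, eventually_forall_mul_lt_abs d (2 * (‖h‖ / ε))]
      with t ht hsmall
    refine linSys_iff_coupledSys.2 (((hF μ).coupledSys_diffQuot (hF _) ht.ne').congr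
      fun i j => inv_mul_max_add_sub_max ht fun hd => lt_of_le_of_lt ?_ (hsmall i j hd))
    have hqi := (norm_le_pi_norm (q t).1 i).trans ((norm_fst_le (q t)).trans (hq_le t ht))
    have hqj := (norm_le_pi_norm (q t).2 j).trans ((norm_snd_le (q t)).trans (hq_le t ht))
    rw [Real.norm_eq_abs] at hqi hqj
    exact mul_le_mul_of_nonneg_left ((abs_add_le _ _).trans (by linarith)) ht.le
  obtain ⟨t₀, ht₀⟩ := hlin.exists
  have huniq : ∀ η', LinSys γ ε d h.1 h.2 η'.1 η'.2 → η' = q t₀ := fun η' hη' =>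
    (linSys_iff_coupledSys.1 hη').eq (linSys_iff_coupledSys.1 ht₀)
      (fun i j => monotone_maxd (d i j)) (mul_pos hγ hε)
  exact ⟨q t₀, ht₀, huniq, tendsto_const_nhds.congr' (hlin.mono fun t ht => (huniq _ ht).symm)⟩

/-- The solution operator of the regularized dual system is directionally differentiable,
with directional derivative given by the unique solution of the linearized dual system. -/
theorem solution_operator_directionally_differentiable
    (n1 n2 : ℕ) (hn1 : 0 < n1) (hn2 : 0 < n2)
    (γ ε : ℝ) (hγ : 0 < γ) (hε : 0 < ε) (c : Fin n1 → Fin n2 → ℝ)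
    (F : (Fin n1 → ℝ) × (Fin n2 → ℝ) → (Fin n1 → ℝ) × (Fin n2 → ℝ))
    (hF : ∀ μ : (Fin n1 → ℝ) × (Fin n2 → ℝ), DualSys γ ε c μ.1 μ.2 (F μ).1 (F μ).2)
    (μ h : (Fin n1 → ℝ) × (Fin n2 → ℝ)) :
    ∃ η : (Fin n1 → ℝ) × (Fin n2 → ℝ),
      LinSys γ ε (fun i j => (F μ).1 i + (F μ).2 j - c i j) h.1 h.2 η.1 η.2 ∧
      (∀ η' : (Fin n1 → ℝ) × (Fin n2 → ℝ),
        LinSys γ ε (fun i j => (F μ).1 i + (F μ).2 j - c i j) h.1 h.2 η'.1 η'.2 → η' = η) ∧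
      Tendsto (fun t : ℝ => (t⁻¹ : ℝ) • (F (μ + t • h) - F μ)) (𝓝[>] 0) (𝓝 η) :=
  solution_operator_directionally_differentiable_general n1 n2 γ ε hγ hε c F hF μ h
end
end
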